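/- arXiv:2209.12828 — 7 statements merged into one kernel-verified Lean document; each statement's English description precedes it below -/
import Mathlib

section
/- Let s ∈ (0,1) and define f(x) = x⁴ - 2x³ + (1-s)x² + 2sx - s. Then f(x) ≥ 0 for every x ∈ [√s, √2]. -/
theorem quartic_eq_sq_mul (s x : ℝ) :
    x^4 - 2*x^3 + (1 - s)*x^2 + 2*s*x - s = (x - 1)^2 * (x^2 - s) := by
  ring

theorem quartic_nonneg_of_pos_s_general (s : ℝ)
    (x : ℝ) (hx : x ∈ Set.Icc (Real.sqrt s) (Real.sqrt 2)) :
    x^4 - 2*x^3 + (1 - s)*x^2 + 2*s*x - s ≥ 0 := by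
  have hs_le : s ≤ x^2 := (Real.sqrt_le_iff.mp hx.1).2
  rw [quartic_eq_sq_mul]
  exact mul_nonneg (sq_nonneg _) (sub_nonneg.mpr hs_le)

theorem quartic_nonneg_of_pos_s (s : ℝ) (hs : s ∈ Set.Ioo (0:ℝ) 1)
    (x : ℝ) (hx : x ∈ Set.Icc (Real.sqrt s) (Real.sqrt 2)) :
    x^4 - 2*x^3 + (1 - s)*x^2 + 2*s*x - s ≥ 0 :=
  quartic_nonneg_of_pos_s_general s x hx
end

section
/- For all real a₁, b₋, c₋: sin b₋ · sin c₋ + 2·√(1 - sin a₁ · cos b₋ · cos c₋) - (1 - sin a₁ · cos b₋ · cos c₋) ≥ 0. -/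
/-! With `t = sin a₁ cos b cos c` and `r = √(1 - t)`, the expression equals
`1 + sin b sin c - (r - 1)²`. Since `r ≥ 0`, `(r - 1)² ≤ |r² - 1| = |t| ≤ |cos b cos c|`, and
`|sin b sin c| + |cos b cos c| ≤ 1` by AM-GM, so `(r - 1)² ≤ 1 + sin b sin c`. -/

open Real

lemma sq_sub_one_le_abs_sq_sub_one {r : ℝ} (hr : 0 ≤ r) : (r - 1) ^ 2 ≤ |r ^ 2 - 1| := by
  rcases le_total 1 r with h | h
  · rw [abs_of_nonneg (by nlinarith)]
    nlinarith
  · rw [abs_of_nonpos (by nlinarith)]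
    nlinarith

lemma sq_sqrt_one_sub_sub_one_le_abs {t : ℝ} (ht : t ≤ 1) : (√(1 - t) - 1) ^ 2 ≤ |t| := by
  have key := sq_sub_one_le_abs_sq_sub_one (sqrt_nonneg (1 - t))
  rwa [sq_sqrt (by linarith), sub_sub_cancel_left, abs_neg] at key

lemma abs_mul_add_abs_mul_le_one {x y z w : ℝ} (hxy : x ^ 2 + y ^ 2 = 1) (hzw : z ^ 2 + w ^ 2 = 1) :
    |x * z| + |y * w| ≤ 1 := by
  rw [abs_mul, abs_mul]
  nlinarith [sq_nonneg (|x| - |z|), sq_nonneg (|y| - |w|), sq_abs x, sq_abs y, sq_abs z, sq_abs w]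

lemma abs_sin_mul_sin_add_abs_cos_mul_cos_le_one (b c : ℝ) :
    |sin b * sin c| + |cos b * cos c| ≤ 1 :=
  abs_mul_add_abs_mul_le_one (sin_sq_add_cos_sq b) (sin_sq_add_cos_sq c)

lemma abs_sin_mul_cos_mul_cos_le (a b c : ℝ) : |sin a * cos b * cos c| ≤ |cos b * cos c| := by
  rw [mul_assoc, abs_mul]
  exact mul_le_of_le_one_left (abs_nonneg _) (abs_sin_le_one a)

theorem holz_I6 (a₁ b c : ℝ) :
    Real.sin b * Real.sin c
      + 2 * Real.sqrt (1 - Real.sin a₁ * Real.cos b * Real.cos c)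
      - (1 - Real.sin a₁ * Real.cos b * Real.cos c) ≥ 0 := by
  set t := sin a₁ * cos b * cos c
  have hbc := abs_sin_mul_sin_add_abs_cos_mul_cos_le_one b c
  have htu : |t| ≤ |cos b * cos c| := abs_sin_mul_cos_mul_cos_le a₁ b c
  have ht : t ≤ 1 := by linarith [le_abs_self t, abs_nonneg (sin b * sin c)]
  have hdev := sq_sqrt_one_sub_sub_one_le_abs ht
  have hsq : √(1 - t) ^ 2 = 1 - t := sq_sqrt (by linarith)
  linarith [neg_abs_le (sin b * sin c)]
end

section
/- For ν ∈ (1/2, 1], the maximum over real angles a₁, b₋, c₋ of (2ν-1)·sin a₁·cos b₋·cos c₋ + sin b₋ + sin c₋ - sin b₋·sin c₋ equals 2ν + 1/(2ν) - 1, attained at a₁ = π/2, b₋ = arctan(1/√(4ν²-1)), c₋ = arcsin(1/(2ν)). -/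
/-!
Put `k = 2ν - 1` and `x = sin b`. For fixed `a`, `b` the expression is
`x + (k sin a cos b) cos c + (1 - x) sin c`, so Cauchy–Schwarz in `(cos c, sin c)` bounds it by
`x + √(k²(1 - x²) + (1 - x)²)`, and this root is at most `k + 1/(k+1) - x` because the
difference of the squares is `(k (x - 1/(k+1)))²`. Equality forces `sin a = 1` and
`sin b = sin c = 1/(k+1)`, which is the stated point.
-/

open Real

noncomputable def holzBell (k a b c : ℝ) : ℝ :=
  k * sin a * cos b * cos c + sin b + sin c - sin b * sin c

lemma mul_add_mul_le_sqrt_sq_add_sq (a b u v : ℝ) (huv : u ^ 2 + v ^ 2 = 1) :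
    a * u + b * v ≤ √(a ^ 2 + b ^ 2) :=
  Real.le_sqrt_of_sq_le (by nlinarith [sq_nonneg (a * v - b * u)])

lemma one_le_add_one_div_add_one {k : ℝ} (hk : 0 ≤ k) : 1 ≤ k + 1 / (k + 1) := by
  have hk1 : k + 1 ≠ 0 := by positivity
  have h : k + 1 / (k + 1) - 1 = k ^ 2 / (k + 1) := by
    field_simp
    ring
  linarith [show 0 ≤ k ^ 2 / (k + 1) by positivity]

lemma sq_mul_add_sq_one_sub_le {k r x : ℝ} (hk : 0 ≤ k) (hrx : r ^ 2 + x ^ 2 ≤ 1) :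
    (k * r) ^ 2 + (1 - x) ^ 2 ≤ (k + 1 / (k + 1) - x) ^ 2 := by
  have hk1 : k + 1 ≠ 0 := by positivity
  have gap : (k + 1 / (k + 1) - x) ^ 2 - (k ^ 2 * (1 - x ^ 2) + (1 - x) ^ 2)
      = (k * (x - 1 / (k + 1))) ^ 2 := by
    field_simp
    ring
  nlinarith [sq_nonneg (k * (x - 1 / (k + 1))),
    mul_nonneg (sq_nonneg k) (by linarith : 0 ≤ 1 - x ^ 2 - r ^ 2)]

lemma holzBell_le {k : ℝ} (hk : 0 ≤ k) (a b c : ℝ) :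
    holzBell k a b c ≤ k + 1 / (k + 1) := by
  set x := sin b
  have hcs : k * sin a * cos b * cos c + (1 - x) * sin c
      ≤ √((k * sin a * cos b) ^ 2 + (1 - x) ^ 2) :=
    mul_add_mul_le_sqrt_sq_add_sq _ _ _ _ (cos_sq_add_sin_sq c)
  have hr : (sin a * cos b) ^ 2 + x ^ 2 ≤ 1 := by
    nlinarith [sin_sq_le_one a, cos_sq_add_sin_sq b, sq_nonneg (cos b)]
  have hroot : √((k * sin a * cos b) ^ 2 + (1 - x) ^ 2) ≤ k + 1 / (k + 1) - x := by
    rw [sqrt_le_left (by linarith [sin_le_one b, one_le_add_one_div_add_one hk])]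
    simpa only [mul_assoc] using sq_mul_add_sq_one_sub_le hk hr
  unfold holzBell
  linarith

lemma sqrt_one_add_one_div_sqrt_sq {t : ℝ} (ht : 1 < t) :
    √(1 + (1 / √(t ^ 2 - 1)) ^ 2) = t / √(t ^ 2 - 1) := by
  have hs : 0 < t ^ 2 - 1 := by nlinarith
  have hsq : 1 + (1 / √(t ^ 2 - 1)) ^ 2 = (t / √(t ^ 2 - 1)) ^ 2 := by
    rw [div_pow, div_pow, sq_sqrt hs.le]
    field_simp
    ring
  rw [hsq, sqrt_sq (by positivity)]

lemma sin_arctan_one_div_sqrt {t : ℝ} (ht : 1 < t) :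
    sin (arctan (1 / √(t ^ 2 - 1))) = 1 / t := by
  have hs : 0 < √(t ^ 2 - 1) := sqrt_pos.2 (by nlinarith)
  rw [sin_arctan, sqrt_one_add_one_div_sqrt_sq ht]
  field_simp

lemma cos_arctan_one_div_sqrt {t : ℝ} (ht : 1 < t) :
    cos (arctan (1 / √(t ^ 2 - 1))) = √(t ^ 2 - 1) / t := by
  rw [cos_arctan, sqrt_one_add_one_div_sqrt_sq ht, one_div_div]

lemma cos_arcsin_one_div {t : ℝ} (ht : 0 < t) : cos (arcsin (1 / t)) = √(t ^ 2 - 1) / t := by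
  have hsq : 1 - (1 / t) ^ 2 = (t ^ 2 - 1) / t ^ 2 := by field_simp
  rw [cos_arcsin, hsq, sqrt_div' _ (sq_nonneg t), sqrt_sq ht.le]

lemma holzBell_optimum {t : ℝ} (ht : 1 < t) :
    holzBell (t - 1) (π / 2) (arctan (1 / √(t ^ 2 - 1))) (arcsin (1 / t)) = t + 1 / t - 1 := by
  have ht0 : 0 < t := by linarith
  have hs : √(t ^ 2 - 1) ^ 2 = t ^ 2 - 1 := sq_sqrt (by nlinarith)
  have hsin : sin (arcsin (1 / t)) = 1 / t :=
    sin_arcsin (by linarith [one_div_pos.2 ht0]) ((div_le_one ht0).2 ht.le)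
  rw [holzBell, sin_pi_div_two, sin_arctan_one_div_sqrt ht, cos_arctan_one_div_sqrt ht, hsin,
    cos_arcsin_one_div ht0]
  field_simp
  linear_combination (t - 1) * hs

theorem holz_max_bell_value (ν : ℝ) (hν : ν ∈ Set.Ioc (1/2 : ℝ) 1) :
    IsGreatest {v : ℝ | ∃ a₁ b c : ℝ,
        v = (2*ν - 1) * Real.sin a₁ * Real.cos b * Real.cos c
            + Real.sin b + Real.sin c - Real.sin b * Real.sin c}
      (2*ν + 1/(2*ν) - 1)
    ∧ (2*ν - 1) * Real.sin (Real.pi/2)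
        * Real.cos (Real.arctan (1 / Real.sqrt (4*ν^2 - 1)))
        * Real.cos (Real.arcsin (1/(2*ν)))
      + Real.sin (Real.arctan (1 / Real.sqrt (4*ν^2 - 1)))
      + Real.sin (Real.arcsin (1/(2*ν)))
      - Real.sin (Real.arctan (1 / Real.sqrt (4*ν^2 - 1)))
        * Real.sin (Real.arcsin (1/(2*ν)))
      = 2*ν + 1/(2*ν) - 1 := by
  have ht : 1 < 2 * ν := by linarith [hν.1]
  have hopt := holzBell_optimum ht
  rw [mul_pow, show (2 : ℝ) ^ 2 = 4 by norm_num] at hopt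
  refine ⟨⟨⟨π / 2, _, _, hopt.symm⟩, ?_⟩, hopt⟩
  rintro v ⟨a, b, c, rfl⟩
  exact (holzBell_le (by linarith) a b c).trans_eq (by rw [sub_add_cancel]; ring)
end

section
/- The function F(β) = 1 - h( (β + 1 + √(β² + 2β - 3)) / 4 ), where h is the binary entropy in base 2, is convex and monotonically increasing on the interval [1, 3/2]. -/
noncomputable def binEnt (x : ℝ) : ℝ :=
  -x * Real.logb 2 x - (1 - x) * Real.logb 2 (1 - x)

noncomputable def holzBound (β : ℝ) : ℝ :=
  1 - binEnt ((β + 1 + Real.sqrt (β^2 + 2*β - 3)) / 4)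

/-! Put `x(β) = (β + 1 + √(β² + 2β - 3)) / 4`, so that `β = 2x + 1/(2x) - 1` and
`x'(β) = 2x² / (4x² - 1)`. Then `F'(β) = log₂ (x / (1 - x)) · 2x² / (4x² - 1)`, which is
nonnegative for `x ∈ (1/2, 1)`, i.e. for `β ∈ (1, 3/2)`. As a function of `x` it is increasing,
which comes down to `log t ≤ (t - 1/t) / 2` for `t = x / (1 - x) ≥ 1`; since `x` increases with
`β`, so does `F'`, and `F` is convex. -/

open Real Set

lemma log_le_half_sub_inv {t : ℝ} (ht : 1 ≤ t) : log t ≤ (t - t⁻¹) / 2 := by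
  have ht0 : 0 < t := one_pos.trans_le ht
  have h : log t ≤ sinh (log t) := self_le_sinh_iff.2 (log_nonneg ht)
  rwa [sinh_eq, exp_log ht0, exp_neg, exp_log ht0] at h

lemma log_sub_log_one_sub_le {u : ℝ} (hu : u ∈ Ico (1/2 : ℝ) 1) :
    log u - log (1 - u) ≤ (2*u - 1) / (2*u*(1 - u)) := by
  obtain ⟨hu2, hu1⟩ := hu
  have hu0 : 0 < u := by linarith
  have h1u : 0 < 1 - u := by linarith
  calc log u - log (1 - u) = log (u / (1 - u)) := (log_div hu0.ne' h1u.ne').symm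
    _ ≤ (u / (1 - u) - (u / (1 - u))⁻¹) / 2 :=
        log_le_half_sub_inv ((one_le_div₀ h1u).2 (by linarith))
    _ = (2*u - 1) / (2*u*(1 - u)) := by field_simp; ring

noncomputable def holzSlope (u : ℝ) : ℝ :=
  (log u - log (1 - u)) * (2*u^2 / (4*u^2 - 1)) / log 2

lemma hasDerivAt_holzSlope {u : ℝ} (hu : u ∈ Ioo (1/2 : ℝ) 1) :
    HasDerivAt holzSlope
      ((2*u^2*(4*u^2 - 1) - 4*u^2*(1 - u)*(log u - log (1 - u))) /
        ((4*u^2 - 1)^2 * u * (1 - u) * log 2)) u := by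
  obtain ⟨hu2, hu1⟩ := hu
  have hu0 : u ≠ 0 := by positivity
  have h1u : 1 - u ≠ 0 := by linarith
  have hden : 4*u^2 - 1 ≠ 0 := by nlinarith
  have hlog : HasDerivAt (fun u => log u - log (1 - u)) (u⁻¹ + (1 - u)⁻¹) u :=
    ((hasDerivAt_log hu0).sub (((hasDerivAt_id u).const_sub 1).log h1u)).congr_deriv
      (by simp; ring)
  have hfrac : HasDerivAt (fun u : ℝ => 2*u^2 / (4*u^2 - 1))
      ((4*u*(4*u^2 - 1) - 2*u^2*(8*u)) / (4*u^2 - 1)^2) u := by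
    have hnum : HasDerivAt (fun u : ℝ => 2*u^2) (4*u) u :=
      ((hasDerivAt_pow 2 u).const_mul (2:ℝ)).congr_deriv (by ring)
    have hden' : HasDerivAt (fun u : ℝ => 4*u^2 - 1) (8*u) u :=
      (((hasDerivAt_pow 2 u).const_mul (4:ℝ)).sub_const 1).congr_deriv (by ring)
    exact hnum.div hden' hden
  refine ((hlog.mul hfrac).div_const (log 2)).congr_deriv ?_
  field_simp
  ring

lemma monotoneOn_holzSlope : MonotoneOn holzSlope (Ioo (1/2 : ℝ) 1) := by
  refine monotoneOn_of_deriv_nonneg (convex_Ioo _ _)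
    (fun u hu => (hasDerivAt_holzSlope hu).continuousAt.continuousWithinAt) ?_ ?_ <;>
    rw [interior_Ioo]
  · exact fun u hu => (hasDerivAt_holzSlope hu).differentiableAt.differentiableWithinAt
  intro u hu
  rw [(hasDerivAt_holzSlope hu).deriv]
  obtain ⟨hu2, hu1⟩ := hu
  have hu0 : 0 < u := by linarith
  have h1u : 0 < 1 - u := by linarith
  have hlog : (log u - log (1 - u)) * (2*u*(1 - u)) ≤ 2*u - 1 :=
    (le_div_iff₀ (by positivity)).1 (log_sub_log_one_sub_le ⟨hu2.le, hu1⟩)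
  refine div_nonneg ?_ (mul_nonneg (by positivity) (log_nonneg one_le_two))
  -- `2u²(4u² - 1) - 2u(2u - 1) = 2u(2u - 1)²(u + 1)`
  nlinarith [mul_le_mul_of_nonneg_left hlog (by positivity : (0:ℝ) ≤ 2*u),
    mul_nonneg (mul_nonneg hu0.le (sq_nonneg (2*u - 1))) (by positivity : (0:ℝ) ≤ u + 1)]

lemma holzSlope_nonneg {u : ℝ} (hu : u ∈ Ioo (1/2 : ℝ) 1) : 0 ≤ holzSlope u := by
  obtain ⟨hu2, hu1⟩ := hu
  have hlog : log (1 - u) ≤ log u := log_le_log (by linarith) (by linarith)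
  have hden : 0 < 4*u^2 - 1 := by nlinarith
  unfold holzSlope
  exact div_nonneg (mul_nonneg (by linarith) (by positivity)) (log_nonneg one_le_two)

noncomputable def holzArg (β : ℝ) : ℝ := (β + 1 + √(β^2 + 2*β - 3)) / 4

lemma binEnt_eq_binEntropy_div_log_two (u : ℝ) : binEnt u = binEntropy u / log 2 := by
  rw [binEnt, binEntropy, logb, logb, log_inv, log_inv]
  ring

lemma holzBound_eq : holzBound = fun β => 1 - binEntropy (holzArg β) / log 2 := by
  funext β
  rw [holzBound, binEnt_eq_binEntropy_div_log_two, holzArg]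

lemma holzArg_mem_Ioo {β : ℝ} (hβ : β ∈ Ioo (1:ℝ) (3/2)) : holzArg β ∈ Ioo (1/2 : ℝ) 1 := by
  obtain ⟨h1, h2⟩ := hβ
  have hs : 0 < √(β^2 + 2*β - 3) := sqrt_pos.2 (by nlinarith)
  have hlt : √(β^2 + 2*β - 3) < 3 - β := (sqrt_lt' (by linarith)).2 (by nlinarith)
  constructor <;> rw [holzArg] <;> linarith

lemma monotoneOn_holzArg : MonotoneOn holzArg (Ici (1:ℝ)) := by
  intro a ha b hb hab
  have : √(a^2 + 2*a - 3) ≤ √(b^2 + 2*b - 3) := sqrt_le_sqrt (by nlinarith [mem_Ici.1 ha])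
  rw [holzArg, holzArg]
  linarith

lemma sqrt_mul_two_holzArg {β : ℝ} (hβ : 1 ≤ β) :
    √(β^2 + 2*β - 3) * (2 * holzArg β) = 4 * holzArg β ^ 2 - 1 := by
  have hs := sq_sqrt (show 0 ≤ β^2 + 2*β - 3 by nlinarith)
  rw [holzArg]
  linear_combination (1/4 : ℝ) * hs

lemma hasDerivAt_holzArg {β : ℝ} (hβ : 1 < β) :
    HasDerivAt holzArg (2 * holzArg β ^ 2 / (4 * holzArg β ^ 2 - 1)) β := by
  have hq : 0 < β^2 + 2*β - 3 := by nlinarith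
  have hs : 0 < √(β^2 + 2*β - 3) := sqrt_pos.2 hq
  have hpoly : HasDerivAt (fun b : ℝ => b^2 + 2*b - 3) (2*β + 2) β :=
    (((hasDerivAt_pow 2 β).add ((hasDerivAt_id β).const_mul 2)).sub_const 3).congr_deriv
      (by simp)
  refine ((((hasDerivAt_id β).add_const 1).add
    ((hasDerivAt_sqrt hq.ne').comp β hpoly)).div_const 4).congr_deriv ?_
  rw [← sqrt_mul_two_holzArg hβ.le, holzArg]
  generalize √(β^2 + 2*β - 3) = s at hs ⊢
  have : β + 1 + s ≠ 0 := by positivity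
  field_simp
  ring

lemma hasDerivAt_holzBound {β : ℝ} (hβ : β ∈ Ioo (1:ℝ) (3/2)) :
    HasDerivAt holzBound (holzSlope (holzArg β)) β := by
  obtain ⟨hx2, hx1⟩ := holzArg_mem_Ioo hβ
  have h := (((hasDerivAt_binEntropy (by positivity) hx1.ne).comp β
    (hasDerivAt_holzArg hβ.1)).div_const (log 2)).const_sub 1
  rw [holzBound_eq]
  refine h.congr_deriv ?_
  rw [holzSlope]
  ring

lemma continuous_holzBound : Continuous holzBound := by
  have : Continuous holzArg := by unfold holzArg; fun_prop
  rw [holzBound_eq]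
  exact continuous_const.sub ((binEntropy_continuous.comp this).div_const _)

theorem holzBound_convex_monotone :
    ConvexOn ℝ (Set.Icc (1:ℝ) (3/2)) holzBound ∧
    MonotoneOn holzBound (Set.Icc (1:ℝ) (3/2)) := by
  have hint : interior (Icc (1:ℝ) (3/2)) = Ioo 1 (3/2) := interior_Icc
  have hcont : ContinuousOn holzBound (Icc (1:ℝ) (3/2)) := continuous_holzBound.continuousOn
  have hdiff : DifferentiableOn ℝ holzBound (interior (Icc (1:ℝ) (3/2))) := fun β hβ =>
    (hasDerivAt_holzBound (hint ▸ hβ)).differentiableAt.differentiableWithinAt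
  have hderiv : EqOn (holzSlope ∘ holzArg) (deriv holzBound) (Ioo 1 (3/2)) :=
    fun β hβ => (hasDerivAt_holzBound hβ).deriv.symm
  constructor
  · refine MonotoneOn.convexOn_of_deriv (convex_Icc _ _) hcont hdiff ?_
    rw [hint]
    refine (monotoneOn_holzSlope.comp ?_ fun β hβ => holzArg_mem_Ioo hβ).congr hderiv
    exact monotoneOn_holzArg.mono fun β hβ => le_of_lt hβ.1
  · refine monotoneOn_of_deriv_nonneg (convex_Icc _ _) hcont hdiff fun β hβ => ?_
    rw [hint] at hβ
    rw [← hderiv hβ]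
    exact holzSlope_nonneg (holzArg_mem_Ioo hβ)
end

section
/- Let (λ_{ijk})_{i,j,k∈{0,1}} be nonnegative reals summing to 1, and (c_{jk})_{j,k∈{0,1}} complex numbers with λ_{0jk}·λ_{1jk} ≥ |c_{jk}|² for all j,k. Define S = Σ_{j,k}(λ_{0jk} - λ_{1jk}) and T = Σ_{j,k}(-1)^k · 2·Im(c_{jk}). Then S² + T² ≤ 1. -/
/-! Viewing `(λ₀ − λ₁, ±2 Im c)` as a point of `ℂ ≅ ℝ²`, the constraint `(Im c)² ≤ |c|² ≤ λ₀λ₁`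
gives it length at most `λ₀ + λ₁`, since `(λ₀ − λ₁)² + 4λ₀λ₁ = (λ₀ + λ₁)²`. By the triangle
inequality `(S, T)`, the sum of these points, then has length at most `∑ (λ₀ + λ₁) = 1`. -/

lemma Complex.norm_mk_sub_le_add {a b t : ℝ} (ha : 0 ≤ a) (hb : 0 ≤ b) (h : t ^ 2 ≤ 4 * a * b) :
    ‖(⟨a - b, t⟩ : ℂ)‖ ≤ a + b := by
  rw [← sq_le_sq₀ (norm_nonneg _) (add_nonneg ha hb), Complex.sq_norm, Complex.normSq_mk]
  nlinarith

lemma sq_sum_sub_add_sq_sum_le {ι : Type*} (s : Finset ι) {a b t : ι → ℝ}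
    (ha : ∀ i ∈ s, 0 ≤ a i) (hb : ∀ i ∈ s, 0 ≤ b i) (ht : ∀ i ∈ s, t i ^ 2 ≤ 4 * a i * b i) :
    (∑ i ∈ s, (a i - b i)) ^ 2 + (∑ i ∈ s, t i) ^ 2 ≤ (∑ i ∈ s, (a i + b i)) ^ 2 := by
  have hnorm : ‖∑ i ∈ s, (⟨a i - b i, t i⟩ : ℂ)‖ ≤ ∑ i ∈ s, (a i + b i) :=
    norm_sum_le_of_le s fun i hi => Complex.norm_mk_sub_le_add (ha i hi) (hb i hi) (ht i hi)
  have hsq := pow_le_pow_left₀ (norm_nonneg _) hnorm 2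
  simpa only [Complex.sq_norm, Complex.normSq_apply, Complex.re_sum, Complex.im_sum, ← sq] using hsq

theorem mabk_XXX_XXY_bound (lam : Fin 2 → Fin 2 → Fin 2 → ℝ)
    (c : Fin 2 → Fin 2 → ℂ)
    (hnn : ∀ i j k, 0 ≤ lam i j k)
    (hsum : ∑ i : Fin 2, ∑ j : Fin 2, ∑ k : Fin 2, lam i j k = 1)
    (hc : ∀ j k, lam 0 j k * lam 1 j k ≥ ‖c j k‖ ^ 2) :
    (∑ j : Fin 2, ∑ k : Fin 2, (lam 0 j k - lam 1 j k))^2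
      + (∑ j : Fin 2, ∑ k : Fin 2, (-1 : ℝ)^(k : ℕ) * (2 * (c j k).im))^2 ≤ 1 := by
  have ht : ∀ j k : Fin 2,
      ((-1 : ℝ) ^ (k : ℕ) * (2 * (c j k).im)) ^ 2 ≤ 4 * lam 0 j k * lam 1 j k := by
    intro j k
    rw [mul_pow, pow_right_comm, neg_one_sq, one_pow, one_mul]
    have him : (c j k).im ^ 2 ≤ ‖c j k‖ ^ 2 :=
      sq_le_sq.mpr ((Complex.abs_im_le_norm _).trans (le_abs_self _))
    nlinarith [hc j k]
  have htotal : ∑ j : Fin 2, ∑ k : Fin 2, (lam 0 j k + lam 1 j k) = 1 := by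
    rw [← hsum]; simp only [Fin.sum_univ_two]; ring
  have key := sq_sum_sub_add_sq_sum_le (Finset.univ : Finset (Fin 2 × Fin 2))
    (a := fun p => lam 0 p.1 p.2) (b := fun p => lam 1 p.1 p.2)
    (t := fun p => (-1 : ℝ) ^ (p.2 : ℕ) * (2 * (c p.1 p.2).im))
    (fun p _ => hnn 0 p.1 p.2) (fun p _ => hnn 1 p.1 p.2) (fun p _ => ht p.1 p.2)
  simpa only [← Finset.univ_product_univ, Finset.sum_product, htotal, one_pow] using key
end

section
/- Let (λ_{ijk})_{i,j,k∈{0,1}} be nonnegative reals summing to 1, and (c_{jk})_{j,k∈{0,1}} complex numbers with λ_{0jk}·λ_{1jk} ≥ |c_{jk}|² for all j,k. Define S' = Σ_{j,k}(-1)^{j+k}(λ_{0jk} - λ_{1jk}) and T' = Σ_{j,k}(-1)^j · 2·Im(c_{jk}). Then S'² + T'² ≤ 1. -/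
/-!
Each pair `(j, k)` contributes the planar vector `(±(λ₀ⱼₖ - λ₁ⱼₖ), ±2 Im cⱼₖ)`, whose length is at
most `λ₀ⱼₖ + λ₁ⱼₖ` because `(2 Im c)² ≤ 4 λ₀λ₁ = (λ₀ + λ₁)² - (λ₀ - λ₁)²`. By the triangle
inequality, in `ℂ`, the sum of these vectors has length at most `∑ (λ₀ⱼₖ + λ₁ⱼₖ) = 1`.
-/

open Finset

theorem sq_sum_add_sq_sum_le_sq_sum {ι : Type*} (s : Finset ι) {a b w : ι → ℝ}
    (hw : ∀ i ∈ s, 0 ≤ w i) (h : ∀ i ∈ s, a i ^ 2 + b i ^ 2 ≤ w i ^ 2) :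
    (∑ i ∈ s, a i) ^ 2 + (∑ i ∈ s, b i) ^ 2 ≤ (∑ i ∈ s, w i) ^ 2 := by
  set z : ι → ℂ := fun i => ⟨a i, b i⟩
  have hnorm_sq (t : Finset ι) : ‖∑ i ∈ t, z i‖ ^ 2 = (∑ i ∈ t, a i) ^ 2 + (∑ i ∈ t, b i) ^ 2 := by
    rw [Complex.sq_norm, Complex.normSq_apply, Complex.re_sum, Complex.im_sum]; ring
  have hz : ∀ i ∈ s, ‖z i‖ ≤ w i := by
    intro i hi
    have hzi := hnorm_sq {i}
    simp only [sum_singleton] at hzi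
    exact (pow_le_pow_iff_left₀ (norm_nonneg _) (hw i hi) two_ne_zero).1 (hzi ▸ h i hi)
  rw [← hnorm_sq]
  gcongr
  exact (norm_sum_le _ _).trans (sum_le_sum hz)

theorem sq_sub_add_sq_two_mul_le_sq_add {R : Type*} [CommRing R] [LinearOrder R]
    [IsStrictOrderedRing R] {p q x : R} (h : x ^ 2 ≤ p * q) :
    (p - q) ^ 2 + (2 * x) ^ 2 ≤ (p + q) ^ 2 := by
  linear_combination 4 * h

theorem Complex.im_sq_le_sq_norm (z : ℂ) : z.im ^ 2 ≤ ‖z‖ ^ 2 := by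
  simpa only [sq_abs] using pow_le_pow_left₀ (abs_nonneg _) (Complex.abs_im_le_norm z) 2

theorem neg_one_pow_mul_sq {R : Type*} [CommRing R] (n : ℕ) (x : R) :
    ((-1) ^ n * x) ^ 2 = x ^ 2 := by
  rw [mul_pow, pow_right_comm, neg_one_sq, one_pow, one_mul]

theorem mabk_XYY_XYX_bound (lam : Fin 2 → Fin 2 → Fin 2 → ℝ)
    (c : Fin 2 → Fin 2 → ℂ)
    (hnn : ∀ i j k, 0 ≤ lam i j k)
    (hsum : ∑ i : Fin 2, ∑ j : Fin 2, ∑ k : Fin 2, lam i j k = 1)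
    (hc : ∀ j k, lam 0 j k * lam 1 j k ≥ ‖c j k‖ ^ 2) :
    (∑ j : Fin 2, ∑ k : Fin 2, (-1 : ℝ)^((j : ℕ) + (k : ℕ)) * (lam 0 j k - lam 1 j k))^2
      + (∑ j : Fin 2, ∑ k : Fin 2, (-1 : ℝ)^(j : ℕ) * (2 * (c j k).im))^2 ≤ 1 := by
  have hweight : ∑ p : Fin 2 × Fin 2, (lam 0 p.1 p.2 + lam 1 p.1 p.2) = 1 := by
    rw [← hsum]
    simp only [Fin.sum_univ_two, Fintype.sum_prod_type]
    ring
  simp only [← Fintype.sum_prod_type']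
  refine (sq_sum_add_sq_sum_le_sq_sum univ (fun p _ => add_nonneg (hnn 0 _ _) (hnn 1 _ _))
    fun p _ => ?_).trans_eq (by rw [hweight, one_pow])
  rw [neg_one_pow_mul_sq, neg_one_pow_mul_sq]
  exact sq_sub_add_sq_two_mul_le_sq_add ((Complex.im_sq_le_sq_norm _).trans (hc p.1 p.2))
end

section
/- Let ρ_{ijk} ≥ 0 for i,j,k ∈ {0,1} with Σ ρ_{ijk} = 1 and ρ_{0jk} ≥ ρ_{1jk} for all j,k, and let t_{jk}, b₋, c₋ be real. Then Σ_{j,k} (ρ_{0jk} - ρ_{1jk})[sin(2t_{jk}) cos b₋ cos c₋ + (-1)^j cos(2t_{jk}) sin b₋ + (-1)^k cos(2t_{jk}) sin c₋] - Σ_{j,k} (-1)^{j+k}(ρ_{0jk} + ρ_{1jk}) sin b₋ sin c₋ ≤ 1. -/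
/-! Each GHZ block `(j, k)` contributes at most `ρ 0 j k + ρ 1 j k`, and these weights sum to `1`.
Writing `σ = (-1)^(j+k)`, the block is `(ρ₀ - ρ₁) (sin θ X + cos θ Y) - σ (ρ₀ + ρ₁) sin b sin c`
with `X = cos b cos c`, `Y = ±sin b ± sin c`. Since `X² + Y² = (1 + σ sin b sin c)²`,
the bound `A sin θ + B cos θ ≤ √(A² + B²)` gives `sin θ X + cos θ Y ≤ 1 + σ sin b sin c`,
and the remaining `-(2 ρ₁) σ sin b sin c` is at most `2 ρ₁`. -/

open Real

lemma sin_mul_add_cos_mul_le_sqrt (θ X Y : ℝ) :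
    sin θ * X + cos θ * Y ≤ √(X ^ 2 + Y ^ 2) := by
  refine Real.le_sqrt_of_sq_le ?_
  have hrot : (sin θ * X + cos θ * Y) ^ 2 + (cos θ * X - sin θ * Y) ^ 2 = X ^ 2 + Y ^ 2 := by
    linear_combination (X ^ 2 + Y ^ 2) * sin_sq_add_cos_sq θ
  linarith [sq_nonneg (cos θ * X - sin θ * Y)]

lemma cos_mul_cos_sq_add_sq_eq {ε₁ ε₂ : ℝ} (hε₁ : ε₁ ^ 2 = 1) (hε₂ : ε₂ ^ 2 = 1) (b c : ℝ) :
    (cos b * cos c) ^ 2 + (ε₁ * sin b + ε₂ * sin c) ^ 2 = (1 + ε₁ * ε₂ * (sin b * sin c)) ^ 2 := by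
  linear_combination (cos c ^ 2) * sin_sq_add_cos_sq b + (1 - sin b ^ 2) * sin_sq_add_cos_sq c
    + sin b ^ 2 * hε₁ + sin c ^ 2 * hε₂ - sin b ^ 2 * sin c ^ 2 * (ε₂ ^ 2 * hε₁ + hε₂)

lemma one_add_mul_sin_mul_sin_nonneg {ε : ℝ} (hε : ε ^ 2 = 1) (b c : ℝ) :
    0 ≤ 1 + ε * (sin b * sin c) := by
  have hsq : (ε * (sin b * sin c)) ^ 2 ≤ 1 := by
    rw [mul_pow, hε, one_mul, mul_pow]
    exact mul_le_one₀ (sin_sq_le_one b) (sq_nonneg _) (sin_sq_le_one c)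
  linarith [neg_le_of_abs_le ((sq_le_one_iff_abs_le_one _).1 hsq)]

lemma sin_mul_cos_mul_cos_add_cos_mul_le {ε₁ ε₂ : ℝ} (hε₁ : ε₁ ^ 2 = 1) (hε₂ : ε₂ ^ 2 = 1)
    (θ b c : ℝ) :
    sin θ * (cos b * cos c) + cos θ * (ε₁ * sin b + ε₂ * sin c)
      ≤ 1 + ε₁ * ε₂ * (sin b * sin c) := by
  have hε : (ε₁ * ε₂) ^ 2 = 1 := by rw [mul_pow, hε₁, hε₂, one_mul]
  calc _ ≤ √((cos b * cos c) ^ 2 + (ε₁ * sin b + ε₂ * sin c) ^ 2) :=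
        sin_mul_add_cos_mul_le_sqrt θ _ _
    _ = 1 + ε₁ * ε₂ * (sin b * sin c) := by
        rw [cos_mul_cos_sq_add_sq_eq hε₁ hε₂, sqrt_sq (one_add_mul_sin_mul_sin_nonneg hε b c)]

lemma ghz_block_le {p q ε₁ ε₂ : ℝ} (hq : 0 ≤ q) (hqp : q ≤ p)
    (hε₁ : ε₁ ^ 2 = 1) (hε₂ : ε₂ ^ 2 = 1) (θ b c : ℝ) :
    (p - q) * (sin θ * cos b * cos c + ε₁ * cos θ * sin b + ε₂ * cos θ * sin c)
      - ε₁ * ε₂ * (p + q) * sin b * sin c ≤ p + q := by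
  have hε : (ε₁ * ε₂) ^ 2 = 1 := by rw [mul_pow, hε₁, hε₂, one_mul]
  have hrot := mul_le_mul_of_nonneg_left (sin_mul_cos_mul_cos_add_cos_mul_le hε₁ hε₂ θ b c)
    (sub_nonneg.2 hqp)
  have hsign := mul_nonneg hq (one_add_mul_sin_mul_sin_nonneg hε b c)
  linarith

theorem holz_C_le_one (ρ : Fin 2 → Fin 2 → Fin 2 → ℝ) (t : Fin 2 → Fin 2 → ℝ)
    (b c : ℝ)
    (hnn : ∀ i j k, 0 ≤ ρ i j k)
    (hsum : ∑ i : Fin 2, ∑ j : Fin 2, ∑ k : Fin 2, ρ i j k = 1)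
    (hord : ∀ j k, ρ 1 j k ≤ ρ 0 j k) :
    (∑ j : Fin 2, ∑ k : Fin 2, (ρ 0 j k - ρ 1 j k) *
        (Real.sin (2 * t j k) * Real.cos b * Real.cos c
          + (-1 : ℝ)^(j : ℕ) * Real.cos (2 * t j k) * Real.sin b
          + (-1 : ℝ)^(k : ℕ) * Real.cos (2 * t j k) * Real.sin c))
      - (∑ j : Fin 2, ∑ k : Fin 2, (-1 : ℝ)^((j : ℕ) + (k : ℕ)) * (ρ 0 j k + ρ 1 j k))
          * Real.sin b * Real.sin c ≤ 1 := by
  have hsign (n : ℕ) : ((-1 : ℝ) ^ n) ^ 2 = 1 := by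
    rw [pow_right_comm, neg_one_sq, one_pow]
  calc _ = ∑ j : Fin 2, ∑ k : Fin 2, ((ρ 0 j k - ρ 1 j k) *
        (sin (2 * t j k) * cos b * cos c + (-1 : ℝ) ^ (j : ℕ) * cos (2 * t j k) * sin b
          + (-1 : ℝ) ^ (k : ℕ) * cos (2 * t j k) * sin c)
        - (-1 : ℝ) ^ ((j : ℕ) + (k : ℕ)) * (ρ 0 j k + ρ 1 j k) * sin b * sin c) := by
        simp only [Finset.sum_mul, ← Finset.sum_sub_distrib]
    _ ≤ ∑ j : Fin 2, ∑ k : Fin 2, (ρ 0 j k + ρ 1 j k) := by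
        gcongr with j _ k _
        rw [pow_add]
        exact ghz_block_le (hnn 1 j k) (hord j k) (hsign j) (hsign k) _ b c
    _ = 1 := by
        rw [← hsum, Fin.sum_univ_two (fun i ↦ ∑ j : Fin 2, ∑ k : Fin 2, ρ i j k)]
        simp only [Finset.sum_add_distrib]
end
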